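/- Let E = EuclideanSpace ℝ (Fin 2) and let Δ ⊆ E be the diagonal, the linear span of the vector (1,1). Let 1 ≤ k ≤ m, let x : Fin k → E be points, let w = (1/k) • ∑ i, x i be their arithmetic mean, let w_Δ be the orthogonal projection of w onto Δ, and set w' = (k/m) • w + ((m−k)/m) • w_Δ. Then for every z ∈ E: ∑ i, ‖z − x i‖² + (m−k) · (infDist z Δ)² ≥ ∑ i, ‖w' − x i‖² + (m−k) · (infDist w' Δ)², with equality if and only if z = w'. That is, w' is the unique arithmetic mean of the k points x₁,…,x_k together with m−k copies of the diagonal. -/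

import Mathlib

/-- The diagonal `Δ = {(a,a) : a ∈ ℝ}` in the plane, as the linear span of `(1,1)`. -/
noncomputable def diagLine : Submodule ℝ (EuclideanSpace ℝ (Fin 2)) :=
  Submodule.span ℝ {(WithLp.equiv 2 (Fin 2 → ℝ)).symm ![1, 1]}

/-!
With `Q` the orthogonal projection onto `Δᗮ`, the cost `f z = ∑ ‖z - xᵢ‖² + c ‖Q z‖²`
(`c = m - k`) is a quadratic whose gradient at `y` is `2 (∑ (y - xᵢ) + c Q y)`. At a stationary
point `y` it expands exactly as `f z = f y + k ‖z - y‖² + c ‖Q (z - y)‖²`, so `y` is the unique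
minimizer. The point `w'` is stationary: its projection onto `Δ` is that of `w`, so
`Q w' = w' - w_Δ`, and `k (w' - w) + (m - k) (w' - w_Δ) = 0` is the defining equation of `w'`.
-/

open scoped RealInnerProductSpace

namespace Submodule

theorem infDist_eq_norm_sub_starProjection {𝕜 E : Type*} [RCLike 𝕜] [NormedAddCommGroup E]
    [InnerProductSpace 𝕜 E] (K : Submodule 𝕜 E) [K.HasOrthogonalProjection] (z : E) :
    Metric.infDist z (K : Set E) = ‖z - K.starProjection z‖ := by
  rw [Metric.infDist_eq_iInf, starProjection_minimal]
  simp_rw [dist_eq_norm]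
  rfl

variable {E : Type*} [NormedAddCommGroup E] [InnerProductSpace ℝ E]
  (K : Submodule ℝ E) [K.HasOrthogonalProjection]

theorem norm_starProjection_sq_eq (y z : E) :
    ‖K.starProjection z‖ ^ 2 =
      ‖K.starProjection y‖ ^ 2 + 2 * ⟪z - y, K.starProjection y⟫ +
        ‖K.starProjection (z - y)‖ ^ 2 := by
  have hz : K.starProjection z = K.starProjection (z - y) + K.starProjection y := by
    rw [← map_add, sub_add_cancel]
  have hinner : ⟪K.starProjection (z - y), K.starProjection y⟫ = ⟪z - y, K.starProjection y⟫ := by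
    rw [inner_starProjection_left_eq_right,
      starProjection_eq_self_iff.mpr (K.starProjection_apply_mem y)]
  rw [hz, norm_add_sq_real, hinner]
  ring

end Submodule

theorem Finset.sum_norm_sub_sq_eq {ι E : Type*} [NormedAddCommGroup E] [InnerProductSpace ℝ E]
    (s : Finset ι) (x : ι → E) (y z : E) :
    ∑ i ∈ s, ‖z - x i‖ ^ 2 =
      ∑ i ∈ s, ‖y - x i‖ ^ 2 + 2 * ⟪z - y, ∑ i ∈ s, (y - x i)⟫ + s.card * ‖z - y‖ ^ 2 := by
  have h (i : ι) : ‖z - x i‖ ^ 2 = ‖y - x i‖ ^ 2 + 2 * ⟪z - y, y - x i⟫ + ‖z - y‖ ^ 2 := by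
    rw [← sub_add_sub_cancel z y (x i), norm_add_sq_real]
    ring
  simp_rw [h, Finset.sum_add_distrib, ← Finset.mul_sum, inner_sum, Finset.sum_const, nsmul_eq_mul]

section FrechetCost

variable {ι E : Type*} [Fintype ι] [NormedAddCommGroup E] [InnerProductSpace ℝ E]
  (K : Submodule ℝ E) [K.HasOrthogonalProjection] (c : ℝ) (x : ι → E)

noncomputable def frechetCost (z : E) : ℝ :=
  ∑ i, ‖z - x i‖ ^ 2 + c * Metric.infDist z (K : Set E) ^ 2

variable {K c x}

theorem frechetCost_eq_add_of_stationary {y : E}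
    (hy : ∑ i, (y - x i) + c • Kᗮ.starProjection y = 0) (z : E) :
    frechetCost K c x z = frechetCost K c x y + Fintype.card ι * ‖z - y‖ ^ 2 +
      c * ‖Kᗮ.starProjection (z - y)‖ ^ 2 := by
  have hcross : ⟪z - y, ∑ i, (y - x i)⟫ + c * ⟪z - y, Kᗮ.starProjection y⟫ = 0 := by
    rw [← real_inner_smul_right, ← inner_add_right, hy, inner_zero_right]
  simp only [frechetCost, K.infDist_eq_norm_sub_starProjection, ← K.starProjection_orthogonal_val]
  rw [Finset.univ.sum_norm_sub_sq_eq x y z, Kᗮ.norm_starProjection_sq_eq y z, Finset.card_univ]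
  linear_combination 2 * hcross

theorem frechetCost_le_and_eq_iff_of_stationary [Nonempty ι] (hc : 0 ≤ c) {y : E}
    (hy : ∑ i, (y - x i) + c • Kᗮ.starProjection y = 0) (z : E) :
    frechetCost K c x y ≤ frechetCost K c x z ∧
      (frechetCost K c x z = frechetCost K c x y ↔ z = y) := by
  have hcard : (0 : ℝ) < Fintype.card ι := by exact_mod_cast Fintype.card_pos
  have hperp : 0 ≤ c * ‖Kᗮ.starProjection (z - y)‖ ^ 2 := by positivity
  rw [frechetCost_eq_add_of_stationary hy z]
  refine ⟨by nlinarith [sq_nonneg ‖z - y‖], ⟨fun h ↦ ?_, fun h ↦ by simp [h]⟩⟩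
  have hnorm : ‖z - y‖ ^ 2 = 0 := by nlinarith [sq_nonneg ‖z - y‖]
  simpa [sub_eq_zero] using hnorm

theorem sum_sub_add_smul_starProjection_eq_zero {m : ℝ} (hm : m ≠ 0) (hι : Fintype.card ι ≠ 0)
    {w w' : E} (hw : w = (1 / Fintype.card ι : ℝ) • ∑ i, x i)
    (hw' : w' = (Fintype.card ι / m) • w + ((m - Fintype.card ι) / m) • K.starProjection w) :
    ∑ i, (w' - x i) + (m - Fintype.card ι) • Kᗮ.starProjection w' = 0 := by
  set k : ℝ := (Fintype.card ι : ℝ)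
  have hk : k ≠ 0 := Nat.cast_ne_zero.mpr hι
  have hsum : ∑ i, x i = k • w := by rw [hw, smul_smul, mul_one_div_cancel hk, one_smul]
  have hproj : K.starProjection w' = K.starProjection w := by
    rw [hw', map_add, map_smul, map_smul,
      Submodule.starProjection_eq_self_iff.mpr (K.starProjection_apply_mem w), ← add_smul, ← add_div,
      add_sub_cancel, div_self hm, one_smul]
  rw [K.starProjection_orthogonal_val, hproj, Finset.sum_sub_distrib, hsum, Finset.sum_const,
    Finset.card_univ, ← Nat.cast_smul_eq_nsmul ℝ, hw']
  match_scalars <;> field_simp <;> ring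

end FrechetCost

/-- The arithmetic mean of `k` off-diagonal points and `m − k` copies of the
diagonal: `w' = (k/m) w + ((m−k)/m) w_Δ` is the unique minimizer of
`z ↦ ∑ᵢ ‖z − xᵢ‖² + (m−k) · infDist(z, Δ)²`. -/
theorem arithmetic_mean_with_diagonal_copies
    (k m : ℕ) (hk : 1 ≤ k) (hkm : k ≤ m)
    (x : Fin k → EuclideanSpace ℝ (Fin 2))
    (w w' : EuclideanSpace ℝ (Fin 2))
    (hw : w = (1 / k : ℝ) • ∑ i, x i)
    (hw' : w' = ((k : ℝ) / m) • w +
      (((m : ℝ) - k) / m) • (Submodule.orthogonalProjectionOnto diagLine w : EuclideanSpace ℝ (Fin 2))) :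
    ∀ z : EuclideanSpace ℝ (Fin 2),
      (∑ i, ‖w' - x i‖ ^ 2 + ((m : ℝ) - k) * Metric.infDist w' (diagLine : Set (EuclideanSpace ℝ (Fin 2))) ^ 2 ≤
        ∑ i, ‖z - x i‖ ^ 2 + ((m : ℝ) - k) * Metric.infDist z (diagLine : Set (EuclideanSpace ℝ (Fin 2))) ^ 2) ∧
      ((∑ i, ‖z - x i‖ ^ 2 + ((m : ℝ) - k) * Metric.infDist z (diagLine : Set (EuclideanSpace ℝ (Fin 2))) ^ 2 =
        ∑ i, ‖w' - x i‖ ^ 2 + ((m : ℝ) - k) * Metric.infDist w' (diagLine : Set (EuclideanSpace ℝ (Fin 2))) ^ 2)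
        ↔ z = w') := by
  have : NeZero k := ⟨by omega⟩
  have hm : (m : ℝ) ≠ 0 := Nat.cast_ne_zero.mpr (by omega)
  have hc : (0 : ℝ) ≤ m - k := sub_nonneg.mpr (by exact_mod_cast hkm)
  have hstat := sum_sub_add_smul_starProjection_eq_zero (K := diagLine) (x := x) hm
    (by rw [Fintype.card_fin]; omega) (by simpa using hw) (by simpa using hw')
  rw [Fintype.card_fin] at hstat
  exact frechetCost_le_and_eq_iff_of_stationary hc hstat
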